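/- Let A and B be square real matrices on ℝ^{d_u} and ℝ^{d_s} respectively, with A invertible, ‖A^{-1}‖ ≤ 1/2 and ‖B‖ ≤ 1/2. Then |det(Id − diag(A,B))| ≥ 2^{-(d_u+d_s)}|det A|. -/

import Mathlib

open Matrix Polynomial NNReal

attribute [local instance] Matrix.linftyOpNormedRing
attribute [local instance] Matrix.linftyOpNormedAlgebra

attribute [local instance] Matrix.linftyOpNormedRing
attribute [local instance] Matrix.linftyOpNormedAlgebra

-- helper: multiset prod lower bound in ℝ≥0
lemma multiset_pow_card_le_prod (s : Multiset ℝ≥0) (a : ℝ≥0) (h : ∀ x ∈ s, a ≤ x) :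
    a ^ (Multiset.card s) ≤ s.prod := by
  induction s using Multiset.induction with
  | empty => simp
  | cons x s ih =>
    simp only [Multiset.card_cons, Multiset.prod_cons, pow_succ']
    exact mul_le_mul' (h x (Multiset.mem_cons_self x s))
      (ih fun y hy => h y (Multiset.mem_cons_of_mem hy))

lemma aux_det_one_sub (d : ℕ) (X : Matrix (Fin d) (Fin d) ℝ) (hX : ‖X‖ ≤ 1 / 2) :
    (1 / 2 : ℝ) ^ d ≤ |(1 - X).det| := by
  rcases Nat.eq_zero_or_pos d with hd | hd
  · subst hd; simp [Matrix.det_isEmpty]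
  have : Nonempty (Fin d) := ⟨⟨0, hd⟩⟩
  -- complexify
  set Z : Matrix (Fin d) (Fin d) ℂ := X.map Complex.ofReal with hZdef
  have hnormZ : ‖Z‖ = ‖X‖ := by
    have : ‖Z‖₊ = ‖X‖₊ := by
      simp [Matrix.linfty_opNNNorm_def, hZdef, Matrix.map_apply]
    exact congrArg NNReal.toReal this
  have hmap : ((1 - X).map (Complex.ofRealHom : ℝ →+* ℂ)) = 1 - Z := by
    ext i j
    simp [Matrix.map_apply, Matrix.one_apply, hZdef]
    split <;> simp
  have hdet : ((1 - Z).det) = ((1 - X).det : ℂ) := by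
    have h := RingHom.map_det Complex.ofRealHom (1 - X)
    rw [RingHom.mapMatrix_apply, hmap] at h
    exact h.symm
  -- roots
  have hsplit : ((1 - Z).charpoly).Splits := IsAlgClosed.splits _
  have hprod : (1 - Z).det = ((1 - Z).charpoly.roots).prod :=
    Matrix.det_eq_prod_roots_charpoly _
  have hcard : Multiset.card ((1 - Z).charpoly.roots) = d := by
    rw [(Polynomial.splits_iff_card_roots).1 hsplit, Matrix.charpoly_natDegree_eq_dim,
      Fintype.card_fin]
  -- each root ν satisfies 1/2 ≤ ‖ν‖
  have hroot : ∀ ν ∈ (1 - Z).charpoly.roots, (1/2 : ℝ≥0) ≤ ‖ν‖₊ := by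
    intro ν hν
    have hν' : IsRoot ((1 - Z).charpoly) ν := Polynomial.isRoot_of_mem_roots hν
    have heval : ((1 - Z).charpoly).eval ν = (Matrix.scalar (Fin d) ν - (1 - Z)).det := by
      rw [Matrix.charpoly, _root_.eval_det, Matrix.matPolyEquiv_charmatrix]
      simp
    have hdet0 : (Matrix.scalar (Fin d) ν - (1 - Z)).det = 0 := by
      rw [← heval]; exact hν'
    have hmem : (1 - ν) ∈ spectrum ℂ Z := by
      rw [spectrum.mem_iff]
      intro hu
      rw [Matrix.isUnit_iff_isUnit_det] at hu
      have : (algebraMap ℂ (Matrix (Fin d) (Fin d) ℂ) (1 - ν) - Z)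
          = -(Matrix.scalar (Fin d) ν - (1 - Z)) := by
        have hsc : Matrix.scalar (Fin d) ν = algebraMap ℂ (Matrix (Fin d) (Fin d) ℂ) ν := by
          rw [Matrix.scalar_apply, Matrix.algebraMap_eq_diagonal]
          rfl
        rw [hsc, map_sub, _root_.map_one]
        abel
      rw [this, Matrix.det_neg, hdet0, mul_zero] at hu
      exact hu.ne_zero rfl
    have h1 : ‖(1 : ℂ) - ν‖ ≤ ‖Z‖ := spectrum.norm_le_norm_of_mem hmem
    have h2 : ‖(1 : ℂ) - ν‖ ≤ 1 / 2 := h1.trans (by rw [hnormZ]; exact hX)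
    have h3 : (1 : ℝ) - ‖ν‖ ≤ 1 / 2 := by
      calc (1 : ℝ) - ‖ν‖ ≤ ‖(1 : ℂ)‖ - ‖ν‖ := by simp
        _ ≤ ‖(1 : ℂ) - ν‖ := norm_sub_norm_le _ _
        _ ≤ 1 / 2 := h2
    have : (1/2 : ℝ) ≤ ‖ν‖ := by linarith
    exact this
  -- conclude
  have habs : ‖(1 - Z).det‖₊ = (((1 - Z).charpoly.roots).map (fun ν => ‖ν‖₊)).prod := by
    rw [hprod]
    exact (nnnormHom : ℂ →*₀ ℝ≥0).toMonoidHom.map_multiset_prod _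
  have hge : (1/2 : ℝ≥0) ^ d ≤ ‖(1 - Z).det‖₊ := by
    have hcard' : Multiset.card (Multiset.map (fun ν => ‖ν‖₊) ((1 - Z).charpoly.roots)) = d := by
      rw [Multiset.card_map, hcard]
    have h := multiset_pow_card_le_prod (Multiset.map (fun ν => ‖ν‖₊) ((1 - Z).charpoly.roots))
      (1/2) (by
        intro x hx
        obtain ⟨ν, hν, rfl⟩ := Multiset.mem_map.1 hx
        exact hroot ν hν)
    rw [hcard'] at h
    rw [habs]
    exact h
  have hnorm : ‖(1 - Z).det‖ = |(1 - X).det| := by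
    rw [hdet, Complex.norm_real, Real.norm_eq_abs]
  calc (1/2 : ℝ)^d = ((1/2 : ℝ≥0)^d : ℝ≥0) := by push_cast; norm_num
    _ ≤ (‖(1 - Z).det‖₊ : ℝ) := by exact_mod_cast hge
    _ = |(1 - X).det| := hnorm


/-- Hyperbolic block lower bound: if `A` is invertible with `‖A⁻¹‖ ≤ 1/2` and `‖B‖ ≤ 1/2`
then `|det(Id − diag(A,B))| ≥ 2^{-(d_u+d_s)} |det A|`. -/
theorem det_one_sub_blockDiag_lower_bound (du ds : ℕ)
    (A : Matrix (Fin du) (Fin du) ℝ) (B : Matrix (Fin ds) (Fin ds) ℝ)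
    (hA : IsUnit A) (hAinv : ‖A⁻¹‖ ≤ 1 / 2) (hB : ‖B‖ ≤ 1 / 2) :
    (2 : ℝ)^(-(du + ds : ℤ)) * |A.det| ≤
      |((1 : Matrix (Fin du ⊕ Fin ds) (Fin du ⊕ Fin ds) ℝ)
        - Matrix.fromBlocks A 0 0 B).det| := by
  have hblock : ((1 : Matrix (Fin du ⊕ Fin ds) (Fin du ⊕ Fin ds) ℝ)
      - Matrix.fromBlocks A 0 0 B) = Matrix.fromBlocks (1 - A) 0 0 (1 - B) := by
    rw [← Matrix.fromBlocks_one]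
    ext (i|i) (j|j) <;> simp [Matrix.fromBlocks]
  rw [hblock, Matrix.det_fromBlocks_zero₂₁, abs_mul]
  -- factor det(1 - A) = ± det A * det (1 - A⁻¹)
  have hAdet : IsUnit A.det := (Matrix.isUnit_iff_isUnit_det A).1 hA
  have hfac : (1 - A) = -(A * (1 - A⁻¹)) := by
    rw [mul_sub, mul_one, Matrix.mul_nonsing_inv A hAdet]
    abel
  have habs1 : |(1 - A).det| = |A.det| * |(1 - A⁻¹).det| := by
    rw [hfac, Matrix.det_neg, Matrix.det_mul, abs_mul, abs_mul, abs_pow, abs_neg, abs_one,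
      one_pow, one_mul]
  rw [habs1]
  have h1 : (1 / 2 : ℝ) ^ du ≤ |(1 - A⁻¹).det| := aux_det_one_sub du A⁻¹ hAinv
  have h2 : (1 / 2 : ℝ) ^ ds ≤ |(1 - B).det| := aux_det_one_sub ds B hB
  have hpow : (2 : ℝ)^(-(du + ds : ℤ)) = (1/2 : ℝ)^du * (1/2 : ℝ)^ds := by
    rw [_root_.zpow_neg]
    have : ((du : ℤ) + ds) = ((du + ds : ℕ) : ℤ) := by push_cast; ring
    rw [this, zpow_natCast, pow_add]
    simp [one_div, inv_pow, mul_inv]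
    ring
  rw [hpow]
  calc (1/2:ℝ)^du * (1/2:ℝ)^ds * |A.det|
      = |A.det| * (1/2:ℝ)^du * (1/2:ℝ)^ds := by ring
    _ ≤ |A.det| * |(1 - A⁻¹).det| * |(1 - B).det| := by
        apply mul_le_mul _ h2 (by positivity) (by positivity)
        exact mul_le_mul_of_nonneg_left h1 (abs_nonneg _)
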